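/- Taking v = u¹ and λ = −ρ¹ in the implicit first-stage weak formulation yields the identity ‖u¹‖²_{L²} + ‖ρ¹‖²_{L²} = (uⁿ, u¹) + (ρⁿ, ρ¹), and hence by Cauchy–Schwarz, ‖u¹‖²_{L²} + ‖ρ¹‖²_{L²} ≤ ‖uⁿ‖²_{L²} + ‖ρⁿ‖²_{L²}. -/

import Mathlib

/-! Testing the two equations with `v = u¹` and `λ = ρ¹` makes the coupling terms
`βΔt (ρ¹, ∇·u¹)` cancel when the second equation is subtracted from the first, leaving
the energy identity. The inequality follows from it by the pointwise bound
`⟪a, b⟫ ≤ (‖a‖² + ‖b‖²) / 2`. -/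

open MeasureTheory

noncomputable section

abbrev Pt (d : ℕ) := EuclideanSpace ℝ (Fin d)

def Per {d : ℕ} {α : Type*} (f : Pt d → α) : Prop :=
  ∀ (x : Pt d) (i : Fin d), f (x + EuclideanSpace.single i 1) = f x

def Box (d : ℕ) : Set (Pt d) := {x | ∀ i, x i ∈ Set.Icc (0 : ℝ) 1}

def dvg {d : ℕ} (u : Pt d → Pt d) (x : Pt d) : ℝ :=
  ∑ i, fderiv ℝ u x (EuclideanSpace.single i 1) i

def Smoo {d : ℕ} {F : Type*} [NormedAddCommGroup F] [NormedSpace ℝ F]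
    (f : Pt d → F) : Prop := ContDiff ℝ (⊤ : ℕ∞) f

theorem isCompact_box (d : ℕ) : IsCompact (Box d) := by
  have h : Box d = (EuclideanSpace.equiv (Fin d) ℝ).toHomeomorph ⁻¹'
      (Set.univ.pi fun _ => Set.Icc (0 : ℝ) 1) := by
    ext x
    exact ⟨fun h i _ => h i, fun h i => h i trivial⟩
  rw [h, Homeomorph.isCompact_preimage]
  exact isCompact_univ_pi fun _ => isCompact_Icc

section InnerBound

variable {E : Type*} [NormedAddCommGroup E] [InnerProductSpace ℝ E]

theorem real_inner_le_half_add_sq (a b : E) : inner ℝ a b ≤ (‖a‖ ^ 2 + ‖b‖ ^ 2) / 2 := by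
  nlinarith [real_inner_le_norm a b, two_mul_le_add_sq ‖a‖ ‖b‖]

theorem integral_inner_le_half_add_sq {α : Type*} [MeasurableSpace α] {μ : Measure α}
    {f g : α → E} (hfg : Integrable (fun x => inner ℝ (f x) (g x)) μ)
    (hf : Integrable (fun x => ‖f x‖ ^ 2) μ) (hg : Integrable (fun x => ‖g x‖ ^ 2) μ) :
    ∫ x, inner ℝ (f x) (g x) ∂μ ≤ ((∫ x, ‖f x‖ ^ 2 ∂μ) + ∫ x, ‖g x‖ ^ 2 ∂μ) / 2 :=
  calc ∫ x, inner ℝ (f x) (g x) ∂μ ≤ ∫ x, (‖f x‖ ^ 2 + ‖g x‖ ^ 2) / 2 ∂μ :=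
        integral_mono hfg ((hf.add hg).div_const 2) fun x => real_inner_le_half_add_sq (f x) (g x)
    _ = ((∫ x, ‖f x‖ ^ 2 ∂μ) + ∫ x, ‖g x‖ ^ 2 ∂μ) / 2 := by
        rw [integral_div, integral_add hf hg]

theorem IsCompact.setIntegral_inner_le_half_add_sq {X : Type*} [TopologicalSpace X] [T2Space X]
    [MeasurableSpace X] [OpensMeasurableSpace X] {μ : Measure X} [IsFiniteMeasureOnCompacts μ]
    {s : Set X} (hs : IsCompact s) {f g : X → E} (hf : Continuous f) (hg : Continuous g) :
    ∫ x in s, inner ℝ (f x) (g x) ∂μ ≤ ((∫ x in s, ‖f x‖ ^ 2 ∂μ) + ∫ x in s, ‖g x‖ ^ 2 ∂μ) / 2 :=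
  integral_inner_le_half_add_sq ((hf.inner hg).continuousOn.integrableOn_compact hs)
    ((hf.norm.pow 2).continuousOn.integrableOn_compact hs)
    ((hg.norm.pow 2).continuousOn.integrableOn_compact hs)

end InnerBound

theorem implicit_first_stage_identity_general (d : ℕ)
    (Δt β : ℝ)
    (ρn ρ1 : Pt d → ℝ) (un u1 : Pt d → Pt d)
    (hρn : Smoo ρn) (hρ1 : Smoo ρ1) (hun : Smoo un) (hu1 : Smoo u1)
    (hpρ1 : Per ρ1) (hpu1 : Per u1)
    (hweak₁ : ∀ v : Pt d → Pt d, Smoo v → Per v →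
      (∫ x in Box d, (inner ℝ (u1 x) (v x) : ℝ)) -
        β * Δt * (∫ x in Box d, ρ1 x * dvg v x) =
      ∫ x in Box d, (inner ℝ (un x) (v x) : ℝ))
    (hweak₂ : ∀ l : Pt d → ℝ, Smoo l → Per l →
      -(β * Δt * (∫ x in Box d, dvg u1 x * l x)) - (∫ x in Box d, ρ1 x * l x) =
      -(∫ x in Box d, ρn x * l x)) :
    ((∫ x in Box d, ‖u1 x‖ ^ 2) + ∫ x in Box d, (ρ1 x) ^ 2 =
      (∫ x in Box d, (inner ℝ (un x) (u1 x) : ℝ)) + ∫ x in Box d, ρn x * ρ1 x) ∧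
    ((∫ x in Box d, ‖u1 x‖ ^ 2) + ∫ x in Box d, (ρ1 x) ^ 2 ≤
      (∫ x in Box d, ‖un x‖ ^ 2) + ∫ x in Box d, (ρn x) ^ 2) := by
  have hv := hweak₁ u1 hu1 hpu1
  have hl := hweak₂ ρ1 hρ1 hpρ1
  simp only [real_inner_self_eq_norm_sq, ← sq, mul_comm (ρ1 _) (dvg u1 _)] at hv hl
  have identity : (∫ x in Box d, ‖u1 x‖ ^ 2) + ∫ x in Box d, (ρ1 x) ^ 2 =
      (∫ x in Box d, (inner ℝ (un x) (u1 x) : ℝ)) + ∫ x in Box d, ρn x * ρ1 x := by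
    linarith
  have bound_u := (isCompact_box d).setIntegral_inner_le_half_add_sq (μ := volume)
    hun.continuous hu1.continuous
  have bound_ρ := (isCompact_box d).setIntegral_inner_le_half_add_sq (μ := volume)
    hρ1.continuous hρn.continuous
  simp only [RCLike.inner_apply, conj_trivial, Real.norm_eq_abs, sq_abs] at bound_ρ
  exact ⟨identity, by linarith⟩

/-- Taking `v = u¹`, `λ = −ρ¹` in the implicit first-stage weak formulation
yields `‖u¹‖² + ‖ρ¹‖² = (uⁿ,u¹) + (ρⁿ,ρ¹)`, and hence, by Cauchy–Schwarz,
`‖u¹‖² + ‖ρ¹‖² ≤ ‖uⁿ‖² + ‖ρⁿ‖²`. -/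
theorem implicit_first_stage_identity (d : ℕ)
    (Δt β : ℝ) (hΔt : 0 < Δt) (hβ : 0 < β)
    (ρn ρ1 : Pt d → ℝ) (un u1 : Pt d → Pt d)
    (hρn : Smoo ρn) (hρ1 : Smoo ρ1) (hun : Smoo un) (hu1 : Smoo u1)
    (hpρn : Per ρn) (hpρ1 : Per ρ1) (hpun : Per un) (hpu1 : Per u1)
    (hweak₁ : ∀ v : Pt d → Pt d, Smoo v → Per v →
      (∫ x in Box d, (inner ℝ (u1 x) (v x) : ℝ)) -
        β * Δt * (∫ x in Box d, ρ1 x * dvg v x) =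
      ∫ x in Box d, (inner ℝ (un x) (v x) : ℝ))
    (hweak₂ : ∀ l : Pt d → ℝ, Smoo l → Per l →
      -(β * Δt * (∫ x in Box d, dvg u1 x * l x)) - (∫ x in Box d, ρ1 x * l x) =
      -(∫ x in Box d, ρn x * l x)) :
    ((∫ x in Box d, ‖u1 x‖ ^ 2) + ∫ x in Box d, (ρ1 x) ^ 2 =
      (∫ x in Box d, (inner ℝ (un x) (u1 x) : ℝ)) + ∫ x in Box d, ρn x * ρ1 x) ∧
    ((∫ x in Box d, ‖u1 x‖ ^ 2) + ∫ x in Box d, (ρ1 x) ^ 2 ≤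
      (∫ x in Box d, ‖un x‖ ^ 2) + ∫ x in Box d, (ρn x) ^ 2) :=
  implicit_first_stage_identity_general d Δt β ρn ρ1 un u1 hρn hρ1 hun hu1 hpρ1 hpu1 hweak₁ hweak₂
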